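/- arXiv:1607.00886 — 6 statements merged into one kernel-verified Lean document; each statement's English description precedes it below -/
import Mathlib

section
/- Let C be a finite set of ordered pairs of indices and Ω_C = {x ∈ [0,1]^N : x_i ≥ x_j for every (i,j) ∈ C} the feasible set. Let I* be a nonempty subset of N₊. If x ∈ Par(Ω_C) with respect to the signed Pareto order, then either x_j = 1 for some j ∈ I*, or there exists a constraint (i,j) ∈ C with i ∉ I*, j ∈ I*, and x_i = x_j. (Otherwise x + ε·𝟙_{I*} would be a feasible point strictly dominating x for small ε > 0.) -/
/-- `pDom Np Nm y x` means `y ≽ x` in the signed Pareto order with ascending index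
set `Np` and descending index set `Nm`. -/
def pDom {N : ℕ} (Np Nm : Set (Fin N)) (y x : Fin N → ℝ) : Prop :=
  (∀ i ∈ Np, x i ≤ y i) ∧ (∀ i ∈ Nm, y i ≤ x i)

/-- Pareto optimal set of `X ⊆ ℝ^N` for the signed Pareto order. -/
def Par {N : ℕ} (Np Nm : Set (Fin N)) (X : Set (Fin N → ℝ)) : Set (Fin N → ℝ) :=
  {x ∈ X | ∀ y ∈ X, pDom Np Nm y x → y = x}

/-- Feasible set of the partial-order constraints `C` inside the unit hypercube:
`x ∈ [0,1]^N` with `x i ≥ x j` for every `(i,j) ∈ C`. -/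
def OmegaC {N : ℕ} (C : Finset (Fin N × Fin N)) : Set (Fin N → ℝ) :=
  {x | (∀ i, x i ∈ Set.Icc (0:ℝ) 1) ∧ ∀ p ∈ C, x p.2 ≤ x p.1}

/-- if `x` is Pareto optimal in the feasible set and `I* ⊆ N₊` is
nonempty, then either some coordinate of `x` on `I*` equals `1`, or some
constraint `(i,j) ∈ C` with `i ∉ I*` and `j ∈ I*` is tight. -/
theorem pareto_ascending_blocked {N : ℕ} (hN : 1 ≤ N) (Np Nm : Set (Fin N))
    (hdisj : Disjoint Np Nm) (hunion : Np ∪ Nm = Set.univ)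
    (C : Finset (Fin N × Fin N)) (Istar : Set (Fin N))
    (hIstar : Istar ⊆ Np) (hne : Istar.Nonempty)
    (x : Fin N → ℝ) (hx : x ∈ Par Np Nm (OmegaC C)) :
    (∃ j ∈ Istar, x j = 1) ∨
      (∃ p ∈ C, p.1 ∉ Istar ∧ p.2 ∈ Istar ∧ x p.1 = x p.2) := by
  classical
  by_contra h
  push_neg at h
  obtain ⟨h1, h2⟩ := h
  obtain ⟨hxΩ, hxPar⟩ := hx
  -- candidate slack values
  set A : Finset (Fin N) := Finset.univ.filter (· ∈ Istar) with hA
  set B : Finset (Fin N × Fin N) := C.filter (fun p => p.1 ∉ Istar ∧ p.2 ∈ Istar) with hB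
  set S : Finset ℝ := A.image (fun j => 1 - x j) ∪ B.image (fun p => x p.1 - x p.2) with hS
  obtain ⟨j0, hj0⟩ := hne
  have hj0A : j0 ∈ A := by simp [hA, hj0]
  have hSne : S.Nonempty := ⟨1 - x j0, by
    simp only [hS, Finset.mem_union, Finset.mem_image]
    exact Or.inl ⟨j0, hj0A, rfl⟩⟩
  set ε : ℝ := S.min' hSne with hε
  have hεpos : 0 < ε := by
    apply (S.lt_min'_iff hSne).2
    intro y hy
    simp only [hS, Finset.mem_union, Finset.mem_image] at hy
    rcases hy with ⟨j, hj, rfl⟩ | ⟨p, hp, rfl⟩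
    · simp only [hA, Finset.mem_filter] at hj
      have := (hxΩ.1 j).2
      have hne1 := h1 j hj.2
      linarith [lt_of_le_of_ne this hne1]
    · simp only [hB, Finset.mem_filter] at hp
      have hle := hxΩ.2 p hp.1
      have hneq := h2 p hp.1 hp.2.1 hp.2.2
      linarith [lt_of_le_of_ne hle (fun e => hneq e.symm)]
  set y : Fin N → ℝ := fun i => if i ∈ Istar then x i + ε else x i with hy
  have hyΩ : y ∈ OmegaC C := by
    constructor
    · intro i
      by_cases hi : i ∈ Istar
      · have hmem : 1 - x i ∈ S := by
          simp only [hS, Finset.mem_union, Finset.mem_image]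
          exact Or.inl ⟨i, by simp [hA, hi], rfl⟩
        have := S.min'_le _ hmem
        constructor
        · simp only [hy, hi, if_pos]
          linarith [(hxΩ.1 i).1]
        · simp only [hy, hi, if_pos]
          linarith
      · simpa [hy, hi] using hxΩ.1 i
    · intro p hp
      have hle := hxΩ.2 p hp
      by_cases h2' : p.2 ∈ Istar
      · by_cases h1' : p.1 ∈ Istar
        · simp only [hy, h1', h2', if_pos]
          linarith
        · have hmem : x p.1 - x p.2 ∈ S := by
            simp only [hS, Finset.mem_union, Finset.mem_image]
            exact Or.inr ⟨p, by simp [hB, hp, h1', h2'], rfl⟩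
          have := S.min'_le _ hmem
          simp only [hy, if_pos h2', if_neg h1']
          linarith
      · by_cases h1' : p.1 ∈ Istar
        · simp only [hy, if_pos h1', if_neg h2']
          linarith
        · simp only [hy, if_neg h1', if_neg h2']
          exact hle
  have hdom : pDom Np Nm y x := by
    constructor
    · intro i _
      by_cases hi : i ∈ Istar
      · simp only [hy, hi, if_pos]; linarith
      · simp [hy, hi]
    · intro i hi
      have : i ∉ Istar := fun hmem => hdisj.ne_of_mem (hIstar hmem) hi rfl
      simp [hy, this]
  have := hxPar y hyΩ hdom
  have := congrFun this j0
  simp only [hy, hj0, if_pos] at this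
  linarith
end

section
/- Let C be a finite set of ordered pairs of indices and Ω_C = {x ∈ [0,1]^N : x_i ≥ x_j for every (i,j) ∈ C} the feasible set. Let I* be a nonempty subset of N₋. If x ∈ Par(Ω_C) with respect to the signed Pareto order, then either x_j = 0 for some j ∈ I*, or there exists a constraint (i,j) ∈ C with i ∈ I*, j ∉ I*, and x_i = x_j. (Otherwise x − ε·𝟙_{I*} would be a feasible point strictly dominating x for small ε > 0.) -/
/-- if `x` is Pareto optimal in the feasible set and `I* ⊆ N₋` is
nonempty, then either some coordinate of `x` on `I*` equals `0`, or some
constraint `(i,j) ∈ C` with `i ∈ I*` and `j ∉ I*` is tight. -/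
theorem pareto_descending_blocked {N : ℕ} (hN : 1 ≤ N) (Np Nm : Set (Fin N))
    (hdisj : Disjoint Np Nm) (hunion : Np ∪ Nm = Set.univ)
    (C : Finset (Fin N × Fin N)) (Istar : Set (Fin N))
    (hIstar : Istar ⊆ Nm) (hne : Istar.Nonempty)
    (x : Fin N → ℝ) (hx : x ∈ Par Np Nm (OmegaC C)) :
    (∃ j ∈ Istar, x j = 0) ∨
      (∃ p ∈ C, p.1 ∈ Istar ∧ p.2 ∉ Istar ∧ x p.1 = x p.2) := by
  classical
  by_contra hcon
  push_neg at hcon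
  obtain ⟨h0, htight⟩ := hcon
  obtain ⟨hxΩ, hpar⟩ := hx
  have hpos : ∀ j ∈ Istar, 0 < x j := by
    intro j hj
    rcases lt_or_eq_of_le (hxΩ.1 j).1 with h | h
    · exact h
    · exact absurd h.symm (h0 j hj)
  have hgap : ∀ p ∈ C, p.1 ∈ Istar → p.2 ∉ Istar → x p.2 < x p.1 := by
    intro p hp h1 h2
    rcases lt_or_eq_of_le (hxΩ.2 p hp) with h | h
    · exact h
    · exact absurd h.symm (htight p hp h1 h2)
  set S : Finset ℝ :=
    (Finset.univ.filter (· ∈ Istar)).image x ∪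
      ((C.filter fun p => p.1 ∈ Istar ∧ p.2 ∉ Istar).image fun p => x p.1 - x p.2) with hS
  obtain ⟨j0, hj0⟩ := hne
  have hSne : S.Nonempty := ⟨x j0, by
    simp only [hS, Finset.mem_union, Finset.mem_image, Finset.mem_filter, Finset.mem_univ]
    exact Or.inl ⟨j0, ⟨trivial, hj0⟩, rfl⟩⟩
  set ε := S.min' hSne with hε
  have hεpos : 0 < ε := by
    rw [hε, Finset.lt_min'_iff]
    intro b hb
    simp only [hS, Finset.mem_union, Finset.mem_image, Finset.mem_filter, Finset.mem_univ] at hb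
    rcases hb with ⟨j, ⟨_, hj⟩, rfl⟩ | ⟨p, ⟨hp, h1, h2⟩, rfl⟩
    · exact hpos j hj
    · exact sub_pos.mpr (hgap p hp h1 h2)
  have hεx : ∀ j ∈ Istar, ε ≤ x j := by
    intro j hj
    apply Finset.min'_le
    simp only [hS, Finset.mem_union, Finset.mem_image, Finset.mem_filter, Finset.mem_univ]
    exact Or.inl ⟨j, ⟨trivial, hj⟩, rfl⟩
  have hεgap : ∀ p ∈ C, p.1 ∈ Istar → p.2 ∉ Istar → ε ≤ x p.1 - x p.2 := by
    intro p hp h1 h2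
    apply Finset.min'_le
    simp only [hS, Finset.mem_union, Finset.mem_image, Finset.mem_filter]
    exact Or.inr ⟨p, ⟨hp, h1, h2⟩, rfl⟩
  set y : Fin N → ℝ := fun i => if i ∈ Istar then x i - ε else x i with hy
  have hyle : ∀ i, y i ≤ x i := by
    intro i
    by_cases h : i ∈ Istar <;> simp [hy, h, hεpos.le]
  have hyΩ : y ∈ OmegaC C := by
    constructor
    · intro i
      refine ⟨?_, le_trans (hyle i) (hxΩ.1 i).2⟩
      by_cases h : i ∈ Istar
      · simp only [hy, h, if_pos]
        linarith [hεx i h]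
      · simp only [hy, h, if_neg, not_false_iff]
        exact (hxΩ.1 i).1
    · intro p hp
      by_cases h1 : p.1 ∈ Istar
      · by_cases h2 : p.2 ∈ Istar
        · simp only [hy, h1, h2, if_pos]
          linarith [hxΩ.2 p hp]
        · simp only [hy, h1, h2, if_pos, if_neg, not_false_iff]
          linarith [hεgap p hp h1 h2]
      · simp only [hy, h1, if_neg, not_false_iff]
        exact le_trans (hyle p.2) (hxΩ.2 p hp)
  have hdom : pDom Np Nm y x := by
    constructor
    · intro i hi
      have : i ∉ Istar := fun hmem => hdisj.le_bot ⟨hi, hIstar hmem⟩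
      simp [hy, this]
    · intro i _
      exact hyle i
  have heq := hpar y hyΩ hdom
  have : y j0 < x j0 := by
    simp only [hy, hj0, if_pos]
    linarith
  rw [heq] at this
  exact lt_irrefl _ this
end

section
/- Let I*, I₁, …, I_K be pairwise disjoint index sets with I* ⊆ N₊ nonempty and I_k ∩ N₋ ≠ ∅ for every k. Let Ω ⊆ [0,1]^N be a set such that every x ∈ Ω is constant on I* and on each I_k, and satisfies x_{I_k} ≥ x_{I*} for every k. Define Ω_k = {x ∈ Ω : x_{I*} = x_{I_k}} for k = 1,…,K and Ω₀ = {x ∈ Ω : x_j = 1 for every j ∈ I*}. Then, with respect to the signed Pareto order, Par(⋃_{k=0}^K Ω_k) = ⋃_{k=0}^K Par(Ω_k). -/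
/-- `x` is constant on the index set `I`. -/
def ConstOn {N : ℕ} (x : Fin N → ℝ) (I : Set (Fin N)) : Prop :=
  ∀ i ∈ I, ∀ j ∈ I, x i = x j

/-- with `I* ⊆ N₊` nonempty and each `I_k` meeting `N₋`, all pairwise
disjoint, `Ω ⊆ [0,1]^N` with points constant on each aggregate and `x_{I_k} ≥ x_{I*}`,
the Pareto set of the union of the slices `Ω₀, Ω₁, …, Ω_K` is the union of their
Pareto sets. -/
theorem par_union_slices {N : ℕ} (hN : 1 ≤ N) (Np Nm : Set (Fin N))
    (hdisj : Disjoint Np Nm) (hunion : Np ∪ Nm = Set.univ)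
    (K : ℕ) (Istar : Set (Fin N)) (I : Fin K → Set (Fin N))
    (hdisjSI : ∀ k, Disjoint Istar (I k))
    (hdisjI : ∀ k l, k ≠ l → Disjoint (I k) (I l))
    (hneS : Istar.Nonempty) (hIstar : Istar ⊆ Np)
    (hIk : ∀ k, (I k ∩ Nm).Nonempty)
    (Om : Set (Fin N → ℝ)) (hcube : Om ⊆ {x | ∀ i, x i ∈ Set.Icc (0:ℝ) 1})
    (hconst : ∀ x ∈ Om, ConstOn x Istar ∧ ∀ k, ConstOn x (I k))
    (hge : ∀ x ∈ Om, ∀ k, ∀ i ∈ I k, ∀ j ∈ Istar, x j ≤ x i) :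
    Par Np Nm
        ({x ∈ Om | ∀ j ∈ Istar, x j = 1} ∪
          ⋃ k, {x ∈ Om | ∀ i ∈ Istar, ∀ j ∈ I k, x i = x j}) =
      Par Np Nm {x ∈ Om | ∀ j ∈ Istar, x j = 1} ∪
        ⋃ k, Par Np Nm {x ∈ Om | ∀ i ∈ Istar, ∀ j ∈ I k, x i = x j} := by
  ext x
  constructor
  · rintro ⟨hx, hopt⟩
    rcases hx with hx0 | hxk
    · exact Or.inl ⟨hx0, fun y hy hd => hopt y (Or.inl hy) hd⟩
    · rcases Set.mem_iUnion.1 hxk with ⟨k, hxk⟩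
      exact Or.inr (Set.mem_iUnion.2 ⟨k,
        ⟨hxk, fun y hy hd => hopt y (Or.inr (Set.mem_iUnion.2 ⟨k, hy⟩)) hd⟩⟩)
  · rintro (⟨⟨hxOm, hx1⟩, hopt⟩ | hx)
    · refine ⟨Or.inl ⟨hxOm, hx1⟩, ?_⟩
      rintro y hy ⟨hP, hM⟩
      have hyOm : y ∈ Om := by
        rcases hy with h | h
        · exact h.1
        · rcases Set.mem_iUnion.1 h with ⟨k, hk⟩; exact hk.1
      have hy1 : ∀ j ∈ Istar, y j = 1 := by
        intro j hj
        have h1 : (1:ℝ) ≤ y j := (hx1 j hj) ▸ hP j (hIstar hj)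
        exact le_antisymm ((hcube hyOm j).2) h1
      exact hopt y ⟨hyOm, hy1⟩ ⟨hP, hM⟩
    · rcases Set.mem_iUnion.1 hx with ⟨k, ⟨⟨hxOm, hxk⟩, hopt⟩⟩
      refine ⟨Or.inr (Set.mem_iUnion.2 ⟨k, ⟨hxOm, hxk⟩⟩), ?_⟩
      rintro y hy ⟨hP, hM⟩
      have hyOm : y ∈ Om := by
        rcases hy with h | h
        · exact h.1
        · rcases Set.mem_iUnion.1 h with ⟨l, hl⟩; exact hl.1
      obtain ⟨j₀, hj₀I, hj₀Nm⟩ := hIk k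
      have hyk : ∀ i ∈ Istar, ∀ j ∈ I k, y i = y j := by
        intro i hi j hj
        -- y j = y j₀ ≤ x j₀ = x i ≤ y i ≤ y j
        have h1 : y j = y j₀ := (hconst y hyOm).2 k j hj j₀ hj₀I
        have h2 : y j₀ ≤ x j₀ := hM j₀ hj₀Nm
        have h3 : x j₀ = x i := (hxk i hi j₀ hj₀I).symm
        have h4 : x i ≤ y i := hP i (hIstar hi)
        have h5 : y i ≤ y j := hge y hyOm k j hj i hi
        linarith
      exact hopt y ⟨hyOm, hyk⟩ ⟨hP, hM⟩
end

section
/- (Correctness of one iteration of the graph contraction algorithm, ascending case.) Let C be a finite set of ordered pairs of indices and Ω = Ω_C = {x ∈ [0,1]^N : x_i ≥ x_j for every (i,j) ∈ C}. Let I*, I₁, …, I_K be pairwise disjoint index sets with I* ⊆ N₊ nonempty and I_k ∩ N₋ ≠ ∅ for every k. Assume: (a) every x ∈ Ω is constant on I* and on each I_k; (b) every x ∈ Ω satisfies x_{I_k} ≥ x_{I*} for each k; (c) for every constraint (i,j) ∈ C with j ∈ I* and i ∉ I*, the index i belongs to ⋃_{k=1}^K I_k. Define Ω_k = {x ∈ Ω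 : x_{I*} = x_{I_k}} for k = 1,…,K and Ω₀ = {x ∈ Ω : x_j = 1 for every j ∈ I*}. Then, with respect to the signed Pareto order, Par(Ω) = ⋃_{k=0}^K Par(Ω_k). -/
/-- correctness of one iteration, ascending case: under hypotheses
(a) every feasible point is constant on `I*` and on each `I_k`;
(b) every feasible point satisfies `x_{I_k} ≥ x_{I*}`;
(c) every constraint entering `I*` from outside comes from `⋃ k, I_k`;
the Pareto set of the feasible set `Ω = Ω_C` is the union of the Pareto sets of
the slices `Ω₀ = {x ∈ Ω : x_{I*} = 1}` and `Ω_k = {x ∈ Ω : x_{I*} = x_{I_k}}`. -/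
theorem par_eq_union_par_slices_ascending {N : ℕ} (hN : 1 ≤ N)
    (Np Nm : Set (Fin N))
    (hdisj : Disjoint Np Nm) (hunion : Np ∪ Nm = Set.univ)
    (C : Finset (Fin N × Fin N))
    (K : ℕ) (Istar : Set (Fin N)) (I : Fin K → Set (Fin N))
    (hdisjSI : ∀ k, Disjoint Istar (I k))
    (hdisjI : ∀ k l, k ≠ l → Disjoint (I k) (I l))
    (hneS : Istar.Nonempty) (hIstar : Istar ⊆ Np)
    (hIk : ∀ k, (I k ∩ Nm).Nonempty)
    (hconst : ∀ x ∈ OmegaC C, ConstOn x Istar ∧ ∀ k, ConstOn x (I k))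
    (hge : ∀ x ∈ OmegaC C, ∀ k, ∀ i ∈ I k, ∀ j ∈ Istar, x j ≤ x i)
    (hin : ∀ p ∈ C, p.2 ∈ Istar → p.1 ∉ Istar → ∃ k, p.1 ∈ I k) :
    Par Np Nm (OmegaC C) =
      Par Np Nm {x ∈ OmegaC C | ∀ j ∈ Istar, x j = 1} ∪
        ⋃ k, Par Np Nm {x ∈ OmegaC C | ∀ i ∈ Istar, ∀ j ∈ I k, x i = x j} := by
  classical
  ext x
  simp only [Set.mem_union, Set.mem_iUnion, Par, Set.mem_setOf_eq, Set.mem_sep_iff]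
  constructor
  · rintro ⟨hxΩ, hpar⟩
    obtain ⟨j₀, hj₀⟩ := hneS
    obtain ⟨hcS, hcI⟩ := hconst x hxΩ
    choose c hc using hIk
    by_contra hcon
    push_neg at hcon
    obtain ⟨h0, hk⟩ := hcon
    -- x is not in Ω₀
    have hx0 : ¬ (∀ j ∈ Istar, x j = 1) := by
      intro h
      obtain ⟨z, hz, hd, hne⟩ := h0 ⟨hxΩ, h⟩
      exact hne (hpar z hz.1 hd)
    -- x is not in any Ω_k
    have hxk : ∀ k, ¬ (∀ i ∈ Istar, ∀ j ∈ I k, x i = x j) := by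
      intro k h
      obtain ⟨z, hz, hd, hne⟩ := hk k ⟨hxΩ, h⟩
      exact hne (hpar z hz.1 hd)
    -- so x j₀ < 1 and x j₀ < x (c k) for all k
    have hxlt1 : x j₀ < 1 := by
      rcases lt_or_eq_of_le ((hxΩ.1 j₀).2) with h | h
      · exact h
      · exact absurd (fun j hj => (hcS j hj j₀ hj₀).trans h) hx0
    have hxltk : ∀ k, x j₀ < x (c k) := by
      intro k
      rcases lt_or_eq_of_le (hge x hxΩ k (c k) (hc k).1 j₀ hj₀) with h | h
      · exact h
      · refine absurd (fun i hi j hj => ?_) (hxk k)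
        rw [hcS i hi j₀ hj₀, h, hcI k (c k) (hc k).1 j hj]
    -- the minimum target value
    set S : Finset ℝ := insert 1 (Finset.univ.image fun k => x (c k)) with hS
    have hSne : S.Nonempty := ⟨1, Finset.mem_insert_self _ _⟩
    set m : ℝ := S.min' hSne with hm
    have hmlt : x j₀ < m := by
      rw [hm, Finset.lt_min'_iff]
      intro b hb
      rw [hS, Finset.mem_insert, Finset.mem_image] at hb
      rcases hb with rfl | ⟨k, -, rfl⟩
      · exact hxlt1
      · exact hxltk k
    have hm1 : m ≤ 1 := Finset.min'_le _ _ (Finset.mem_insert_self _ _)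
    have hmk : ∀ k, m ≤ x (c k) := fun k => Finset.min'_le _ _
      (Finset.mem_insert_of_mem (Finset.mem_image_of_mem _ (Finset.mem_univ k)))
    -- the improved point
    set y : Fin N → ℝ := fun i => if i ∈ Istar then m else x i with hy
    have hyΩ : y ∈ OmegaC C := by
      constructor
      · intro i
        simp only [hy]
        split
        · exact ⟨le_of_lt (lt_of_le_of_lt (hxΩ.1 j₀).1 hmlt), hm1⟩
        · exact hxΩ.1 i
      · intro p hp
        by_cases h2 : p.2 ∈ Istar
        · by_cases h1 : p.1 ∈ Istar
          · simp only [hy, if_pos h1, if_pos h2, le_refl]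
          · obtain ⟨k, hk1⟩ := hin p hp h2 h1
            simp only [hy, if_pos h2, if_neg h1]
            calc m ≤ x (c k) := hmk k
              _ = x p.1 := hcI k (c k) (hc k).1 p.1 hk1
        · by_cases h1 : p.1 ∈ Istar
          · simp only [hy, if_pos h1, if_neg h2]
            calc x p.2 ≤ x p.1 := hxΩ.2 p hp
              _ = x j₀ := hcS p.1 h1 j₀ hj₀
              _ ≤ m := le_of_lt hmlt
          · simp only [hy, if_neg h1, if_neg h2]
            exact hxΩ.2 p hp
    have hdom : pDom Np Nm y x := by
      constructor
      · intro i hi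
        simp only [hy]
        split
        · next h => exact (hcS i h j₀ hj₀).le.trans hmlt.le
        · exact le_refl _
      · intro i hi
        have : i ∉ Istar := fun h => hdisj.ne_of_mem (hIstar h) hi rfl
        simp only [hy, if_neg this, le_refl]
    have := hpar y hyΩ hdom
    have : y j₀ = x j₀ := by rw [this]
    simp only [hy, if_pos hj₀] at this
    exact absurd this (ne_of_gt hmlt)
  · rintro (⟨⟨hxΩ, hx1⟩, hp⟩ | ⟨k, ⟨hxΩ, hxk⟩, hp⟩)
    · refine ⟨hxΩ, fun y hy hd => ?_⟩
      refine hp y ⟨hy, fun j hj => le_antisymm ((hy.1 j).2) ?_⟩ hd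
      calc (1:ℝ) = x j := (hx1 j hj).symm
        _ ≤ y j := hd.1 j (hIstar hj)
    · refine ⟨hxΩ, fun y hy hd => ?_⟩
      obtain ⟨ck, hck, hckm⟩ := hIk k
      refine hp y ⟨hy, fun i hi j hj => le_antisymm (hge y hy k j hj i hi) ?_⟩ hd
      calc y j = y ck := (hconst y hy).2 k j hj ck hck
        _ ≤ x ck := hd.2 ck hckm
        _ = x i := (hxk i hi ck hck).symm
        _ ≤ y i := hd.1 i (hIstar hi)
end

section
/- (Correctness of one iteration of the graph contraction algorithm, descending case.) Let C be a finite set of ordered pairs of indices and Ω = Ω_C = {x ∈ [0,1]^N : x_i ≥ x_j for every (i,j) ∈ C}. Let I*, I₁, …, I_K be pairwise disjoint index sets with I* ⊆ N₋ nonempty and I_k ∩ N₊ ≠ ∅ for every k. Assume: (a) every x ∈ Ω is constant on I* and on each I_k; (b) every x ∈ Ω satisfies x_{I*} ≥ x_{I_k} for each k; (c) for every constraint (i,j) ∈ C with i ∈ I* and j ∉ I*, the index j belongs to ⋃_{k=1}^K I_k. Define Ω_k = {x ∈ Ω : x_{I*} = x_{I_k}} for k = 1,…,K and Ω₀ = {x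 ∈ Ω : x_j = 0 for every j ∈ I*}. Then, with respect to the signed Pareto order, Par(Ω) = ⋃_{k=0}^K Par(Ω_k). -/

theorem par_sub {N : ℕ} (Np Nm : Set (Fin N)) {X S : Set (Fin N → ℝ)}
    (hS : S ⊆ X) {x : Fin N → ℝ} (hx : x ∈ Par Np Nm X) (hxS : x ∈ S) :
    x ∈ Par Np Nm S :=
  ⟨hxS, fun y hy hd => hx.2 y (hS hy) hd⟩

/-- correctness of one iteration, descending case: under hypotheses
(a) every feasible point is constant on `I*` and on each `I_k`;
(b) every feasible point satisfies `x_{I*} ≥ x_{I_k}`;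
(c) every constraint leaving `I*` goes into `⋃ k, I_k`;
the Pareto set of the feasible set `Ω = Ω_C` is the union of the Pareto sets of
the slices `Ω₀ = {x ∈ Ω : x_{I*} = 0}` and `Ω_k = {x ∈ Ω : x_{I*} = x_{I_k}}`. -/
theorem par_eq_union_par_slices_descending {N : ℕ} (hN : 1 ≤ N)
    (Np Nm : Set (Fin N))
    (hdisj : Disjoint Np Nm) (hunion : Np ∪ Nm = Set.univ)
    (C : Finset (Fin N × Fin N))
    (K : ℕ) (Istar : Set (Fin N)) (I : Fin K → Set (Fin N))
    (hdisjSI : ∀ k, Disjoint Istar (I k))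
    (hdisjI : ∀ k l, k ≠ l → Disjoint (I k) (I l))
    (hneS : Istar.Nonempty) (hIstar : Istar ⊆ Nm)
    (hIk : ∀ k, (I k ∩ Np).Nonempty)
    (hconst : ∀ x ∈ OmegaC C, ConstOn x Istar ∧ ∀ k, ConstOn x (I k))
    (hge : ∀ x ∈ OmegaC C, ∀ k, ∀ i ∈ I k, ∀ j ∈ Istar, x i ≤ x j)
    (hout : ∀ p ∈ C, p.1 ∈ Istar → p.2 ∉ Istar → ∃ k, p.2 ∈ I k) :
    Par Np Nm (OmegaC C) =
      Par Np Nm {x ∈ OmegaC C | ∀ j ∈ Istar, x j = 0} ∪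
        ⋃ k, Par Np Nm {x ∈ OmegaC C | ∀ i ∈ Istar, ∀ j ∈ I k, x i = x j} := by

  classical
  obtain ⟨i0, hi0⟩ := hneS
  have hi0m : i0 ∈ Nm := hIstar hi0
  set r : Fin K → Fin N := fun k => (hIk k).choose with hr
  have hrI : ∀ k, r k ∈ I k := fun k => (hIk k).choose_spec.1
  have hrP : ∀ k, r k ∈ Np := fun k => (hIk k).choose_spec.2
  ext x
  constructor
  · rintro ⟨hxΩ, hxPar⟩
    by_cases h0 : x i0 = 0
    · left
      refine par_sub Np Nm (fun y hy => hy.1) ⟨hxΩ, hxPar⟩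
        ⟨hxΩ, fun j hj => ((hconst x hxΩ).1 j hj i0 hi0).trans h0⟩
    by_cases hk : ∃ k, x (r k) = x i0
    · obtain ⟨k, hkeq⟩ := hk
      right
      refine Set.mem_iUnion.2 ⟨k, par_sub Np Nm (fun y hy => hy.1) ⟨hxΩ, hxPar⟩
        ⟨hxΩ, fun i hiS j hjk => ?_⟩⟩
      calc x i = x i0 := (hconst x hxΩ).1 i hiS i0 hi0
        _ = x (r k) := hkeq.symm
        _ = x j := (hconst x hxΩ).2 k (r k) (hrI k) j hjk
    · exfalso
      push_neg at hk
      set s := x i0 with hs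
      have hspos : 0 < s := lt_of_le_of_ne (hxΩ.1 i0).1 (Ne.symm h0)
      have hstrict : ∀ k, x (r k) < s :=
        fun k => lt_of_le_of_ne (hge x hxΩ k (r k) (hrI k) i0 hi0) (hk k)
      set T : Finset ℝ := insert s (Finset.image (fun k => s - x (r k)) Finset.univ) with hT
      have hTne : T.Nonempty := ⟨s, Finset.mem_insert_self _ _⟩
      set m := T.min' hTne with hm
      have hms : m ≤ s := Finset.min'_le T s (Finset.mem_insert_self _ _)
      have hmk : ∀ k, m ≤ s - x (r k) := fun k =>
        Finset.min'_le T _ (Finset.mem_insert_of_mem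
          (Finset.mem_image_of_mem _ (Finset.mem_univ k)))
      have hmpos : 0 < m := by
        rw [hm, Finset.lt_min'_iff]
        intro b hb
        rcases Finset.mem_insert.1 hb with hb | hb
        · exact hb ▸ hspos
        · obtain ⟨k, -, hb⟩ := Finset.mem_image.1 hb
          exact hb ▸ sub_pos.2 (hstrict k)
      set y : Fin N → ℝ := fun j => if j ∈ Istar then x j - m else x j with hy
      have hyS : ∀ j ∈ Istar, y j = s - m := by
        intro j hj
        simp only [hy, if_pos hj]
        rw [(hconst x hxΩ).1 j hj i0 hi0]
      have hyO : ∀ j, j ∉ Istar → y j = x j := by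
        intro j hj; simp only [hy, if_neg hj]
      have hyΩ : y ∈ OmegaC C := by
        constructor
        · intro j
          by_cases hj : j ∈ Istar
          · rw [hyS j hj]
            exact ⟨sub_nonneg.2 hms, le_trans (by linarith) (hxΩ.1 i0).2⟩
          · rw [hyO j hj]; exact hxΩ.1 j
        · intro p hp
          by_cases h1 : p.1 ∈ Istar <;> by_cases h2 : p.2 ∈ Istar
          · rw [hyS _ h1, hyS _ h2]
          · obtain ⟨k, hk2⟩ := hout p hp h1 h2
            rw [hyS _ h1, hyO _ h2,
              (hconst x hxΩ).2 k p.2 hk2 (r k) (hrI k)]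
            linarith [hmk k]
          · rw [hyO _ h1, hyS _ h2]
            have := hxΩ.2 p hp
            have h2s : x p.2 = s := (hconst x hxΩ).1 p.2 h2 i0 hi0
            linarith
          · rw [hyO _ h1, hyO _ h2]; exact hxΩ.2 p hp
      have hdom : pDom Np Nm y x := by
        constructor
        · intro i hi
          have : i ∉ Istar := fun h => hdisj.le_bot ⟨hi, hIstar h⟩
          rw [hyO i this]
        · intro i _
          by_cases hi : i ∈ Istar
          · rw [hyS i hi, (hconst x hxΩ).1 i hi i0 hi0]; linarith
          · rw [hyO i hi]
      have := hxPar y hyΩ hdom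
      have : y i0 = x i0 := by rw [this]
      rw [hyS i0 hi0] at this
      linarith
  · rintro (⟨⟨hxΩ, hx0⟩, hxPar⟩ | hx)
    · refine ⟨hxΩ, fun y hyΩ hdom => ?_⟩
      refine hxPar y ⟨hyΩ, fun j hj => ?_⟩ hdom
      have h1 : y j ≤ x j := hdom.2 j (hIstar hj)
      have h2 : 0 ≤ y j := (hyΩ.1 j).1
      have := hx0 j hj
      linarith
    · obtain ⟨k, ⟨⟨hxΩ, hxk⟩, hxPar⟩⟩ := Set.mem_iUnion.1 hx
      refine ⟨hxΩ, fun y hyΩ hdom => ?_⟩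
      refine hxPar y ⟨hyΩ, fun i hiS j hjk => ?_⟩ hdom
      have key : y i0 = y (r k) := by
        have h1 : y i0 ≤ x i0 := hdom.2 i0 hi0m
        have h2 : x (r k) ≤ y (r k) := hdom.1 (r k) (hrP k)
        have h3 : y (r k) ≤ y i0 := hge y hyΩ k (r k) (hrI k) i0 hi0
        have h4 : x i0 = x (r k) := hxk i0 hi0 (r k) (hrI k)
        linarith
      calc y i = y i0 := (hconst y hyΩ).1 i hiS i0 hi0
        _ = y (r k) := key
        _ = y j := (hconst y hyΩ).2 k (r k) (hrI k) j hjk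
end

section
/- (Terminal diagrams parameterize subsets of the Pareto front.) Let B_1, …, B_m be a partition of the index set {1,…,N} and let Ω ⊆ ℝ^N be a set such that every x ∈ Ω is constant on each block B_l, and each block B_l satisfies at least one of: (i) B_l ∩ N₊ ≠ ∅ and B_l ∩ N₋ ≠ ∅ (trade-off block), or (ii) there is a constant c_l such that x_i = c_l for every x ∈ Ω and every i ∈ B_l (boundary block). Then Ω is an antichain for the signed Pareto order: if x, y ∈ Ω and y ≽ x then y = x; consequently Par(Ω) = Ω. -/
/-- terminal diagrams parameterize subsets of the Pareto front:
if every point of `Ω` is constant on each block of a partition `B_1, …, B_m` of the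
index set, and each block is either a trade-off block (meeting both `N₊` and `N₋`)
or a boundary block (fixed to a constant on `Ω`), then `Ω` is an antichain for the
signed Pareto order and `Par(Ω) = Ω`. -/
theorem terminal_antichain {N : ℕ} (hN : 1 ≤ N) (Np Nm : Set (Fin N))
    (hdisj : Disjoint Np Nm) (hunion : Np ∪ Nm = Set.univ)
    (m : ℕ) (B : Fin m → Set (Fin N))
    (hdisjB : ∀ l l', l ≠ l' → Disjoint (B l) (B l'))
    (hcover : (⋃ l, B l) = Set.univ)
    (Om : Set (Fin N → ℝ))
    (hconst : ∀ x ∈ Om, ∀ l, ConstOn x (B l))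
    (hblock : ∀ l, ((B l ∩ Np).Nonempty ∧ (B l ∩ Nm).Nonempty) ∨
      (∃ c : ℝ, ∀ x ∈ Om, ∀ i ∈ B l, x i = c)) :
    (∀ x ∈ Om, ∀ y ∈ Om, pDom Np Nm y x → y = x) ∧ Par Np Nm Om = Om := by
  have key : ∀ x ∈ Om, ∀ y ∈ Om, pDom Np Nm y x → y = x := by
    intro x hx y hy ⟨h1, h2⟩
    funext i
    have : i ∈ ⋃ l, B l := by rw [hcover]; trivial
    obtain ⟨l, hl⟩ := Set.mem_iUnion.mp this
    rcases hblock l with ⟨⟨j, hjB, hjp⟩, ⟨k, hkB, hkm⟩⟩ | ⟨c, hc⟩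
    · have hx1 := hconst x hx l i hl j hjB
      have hx2 := hconst x hx l i hl k hkB
      have hy1 := hconst y hy l i hl j hjB
      have hy2 := hconst y hy l i hl k hkB
      have := h1 j hjp
      have := h2 k hkm
      linarith
    · rw [hc y hy i hl, hc x hx i hl]
  exact ⟨key, Set.ext fun x => ⟨fun h => h.1, fun hx => ⟨hx, fun y hy => key x hx y hy⟩⟩⟩
end
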